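/- arXiv:math/0703914 — 3 statements merged into one kernel-verified Lean document; each statement's English description precedes it below -/
import Mathlib

section
/- Let T be an invertible measure preserving extension of S via π with disintegration (μ_y). Let A ∈ B with μ(A) > 0, ε > 0, B = {y ∈ Y : μ_y(A) > ε} with ν(B) > 0, and suppose n ∈ ℕ satisfies ν(⋂_{j=0}^{M} S^{-jn} B) > 0. Then there exists a set E ⊆ {0,1,…,M} with |E| > εM such that μ(⋂_{j∈E} T^{-jn} A) > 0. -/
open MeasureTheory

/-- From multiple recurrence of the base to a positive-density set of return times
in the fiber: if `ν(⋂_{j=0}^M S^{-jn} B) > 0` where `B = {y : μ_y(A) > ε}`, then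
there is `E ⊆ {0,…,M}` with `|E| > εM` and `μ(⋂_{j∈E} T^{-jn} A) > 0`. -/
theorem stmt_3 {X Y : Type*} [MeasurableSpace X] [MeasurableSpace Y]
    (μ : Measure X) (ν : Measure Y) [SigmaFinite μ] [SigmaFinite ν]
    (S : Equiv.Perm Y) (hSm : Measurable S) (hSm' : Measurable S.symm)
    (hS : MeasurePreserving S ν ν)
    (T : Equiv.Perm X) (hTm : Measurable T) (hTm' : Measurable T.symm)
    (hT : MeasurePreserving T μ μ)
    (π : X → Y) (hπ : Measurable π) (hcomm : π ∘ ⇑T = ⇑S ∘ π)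
    (hpush : Measure.map π μ = ν)
    (κ : Y → Measure X)
    (hκmeas : ∀ A : Set X, MeasurableSet A → Measurable fun y => κ y A)
    (hκdis : ∀ B : Set Y, MeasurableSet B → ∀ A : Set X, MeasurableSet A →
      ∫⁻ y in B, κ y A ∂ν = μ (A ∩ π ⁻¹' B))
    (A : Set X) (hA : MeasurableSet A) (hApos : 0 < μ A)
    (ε : ENNReal) (hε : 0 < ε)
    (B : Set Y) (hB : B = {y : Y | ε < κ y A}) (hBpos : 0 < ν B)
    (M n : ℕ)
    (hrec : 0 < ν (⋂ j ∈ Finset.range (M + 1), (⇑S)^[j * n] ⁻¹' B)) :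
    ∃ E ⊆ Finset.range (M + 1), ε * M < (E.card : ENNReal) ∧
      0 < μ (⋂ j ∈ E, (⇑T)^[j * n] ⁻¹' A) := by
  classical
  -- ε is finite
  obtain ⟨y0, hy0⟩ := nonempty_of_measure_ne_zero hBpos.ne'
  have hεtop : ε ≠ ⊤ := by
    intro h
    rw [hB] at hy0
    simp only [Set.mem_setOf_eq] at hy0
    exact not_top_lt (h ▸ hy0)
  have hBmeas : MeasurableSet B := by
    rw [hB]; exact measurableSet_lt measurable_const (hκmeas A hA)
  set Bstar := ⋂ j ∈ Finset.range (M + 1), (⇑S)^[j * n] ⁻¹' B with hBstar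
  have hBstarMeas : MeasurableSet Bstar :=
    Finset.measurableSet_biInter _ fun j _ => (hSm.iterate _) hBmeas
  obtain ⟨B', hB'meas, hB'sub, hB'pos, hB'top⟩ :=
    MeasureTheory.Measure.exists_subset_measure_lt_top hBstarMeas hrec
  have hsc : Function.Semiconj π ⇑T ⇑S := fun x => congrFun hcomm x
  -- key fiber bound
  have key : ∀ j ∈ Finset.range (M + 1),
      ε * ν B' ≤ μ ((⇑T)^[j * n] ⁻¹' A ∩ π ⁻¹' B') := by
    intro j hj
    set k := j * n with hk
    have hsck : Function.Semiconj π ((⇑T)^[k]) ((⇑S)^[k]) := hsc.iterate_right k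
    have hLI : Function.LeftInverse ((⇑S.symm)^[k]) ((⇑S)^[k]) := S.left_inv.iterate k
    have hRI : Function.LeftInverse ((⇑S)^[k]) ((⇑S.symm)^[k]) := S.right_inv.iterate k
    set C : Set Y := (⇑S.symm)^[k] ⁻¹' B' with hC
    have hCmeas : MeasurableSet C := (hSm'.iterate _) hB'meas
    have hseteq : (⇑T)^[k] ⁻¹' A ∩ π ⁻¹' B' = (⇑T)^[k] ⁻¹' (A ∩ π ⁻¹' C) := by
      ext x
      simp only [Set.mem_inter_iff, Set.mem_preimage, hC, hsck x, hLI (π x)]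
    have hνC : ν C = ν B' := by
      rw [hC]
      have hSsymm : MeasurePreserving ⇑S.symm ν ν := by
        refine ⟨hSm', ?_⟩
        conv_lhs => rw [← hS.map_eq]
        rw [Measure.map_map hSm' hSm, Equiv.symm_comp_self, Measure.map_id]
      exact (hSsymm.iterate k).measure_preimage hB'meas.nullMeasurableSet
    have hmes : μ ((⇑T)^[k] ⁻¹' A ∩ π ⁻¹' B') = μ (A ∩ π ⁻¹' C) := by
      rw [hseteq]
      exact (hT.iterate k).measure_preimage (hA.inter (hπ hCmeas)).nullMeasurableSet
    have hCB : C ⊆ B := by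
      intro y hy
      have h1 : (⇑S.symm)^[k] y ∈ Bstar := hB'sub hy
      have h2 : (⇑S.symm)^[k] y ∈ (⇑S)^[k] ⁻¹' B := by
        rw [hBstar] at h1
        simp only [Set.mem_iInter] at h1
        exact h1 j hj
      have h3 : (⇑S)^[k] ((⇑S.symm)^[k] y) ∈ B := h2
      rwa [hRI y] at h3
    have hlb : ε * ν B' ≤ ∫⁻ y in C, κ y A ∂ν := by
      rw [← hνC]
      calc ε * ν C = ∫⁻ _ in C, ε ∂ν := (setLIntegral_const C ε).symm
        _ ≤ ∫⁻ y in C, κ y A ∂ν := by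
            refine setLIntegral_mono (hκmeas A hA) fun y hy => ?_
            have : y ∈ B := hCB hy
            rw [hB] at this
            exact this.le
    rw [hmes, ← hκdis C hCmeas A hA]
    exact hlb
  by_contra hcon
  push_neg at hcon
  -- the bad union has measure zero
  set F : Finset (Finset ℕ) :=
    (Finset.range (M + 1)).powerset.filter (fun E => ε * M < (E.card : ENNReal)) with hF
  set N : Set X := ⋃ E ∈ F, ⋂ j ∈ E, (⇑T)^[j * n] ⁻¹' A with hN
  have hNnull : μ N = 0 := by
    rw [hN]
    refine (measure_biUnion_null_iff F.countable_toSet).2 fun E hE => ?_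
    simp only [hF, Finset.coe_filter, Finset.mem_powerset, Set.mem_setOf_eq] at hE
    exact le_zero_iff.mp (hcon E hE.1 hE.2)
  -- pointwise bound off N
  have hle : ∀ x, x ∈ π ⁻¹' B' → x ∉ N →
      (∑ j ∈ Finset.range (M + 1), ((⇑T)^[j * n] ⁻¹' A).indicator (1 : X → ENNReal) x)
        ≤ ε * M := by
    intro x _ hxN
    set Ex : Finset ℕ :=
      (Finset.range (M + 1)).filter (fun j => x ∈ (⇑T)^[j * n] ⁻¹' A) with hEx
    have hsum_eq : (∑ j ∈ Finset.range (M + 1),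
        ((⇑T)^[j * n] ⁻¹' A).indicator (1 : X → ENNReal) x) = (Ex.card : ENNReal) := by
      rw [hEx]
      simp [Set.indicator_apply, Finset.sum_boole]
    rw [hsum_eq]
    by_contra hlt
    push_neg at hlt
    have hExF : Ex ∈ F := by
      rw [hF]
      refine Finset.mem_filter.2 ⟨Finset.mem_powerset.2 (Finset.filter_subset _ _), hlt⟩
    have hxN' : x ∈ N := by
      rw [hN]
      refine Set.mem_biUnion hExF ?_
      simp only [Set.mem_iInter]
      intro j hj
      exact (Finset.mem_filter.mp hj).2
    exact hxN hxN'
  -- integral computations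
  have hPmeas : MeasurableSet (π ⁻¹' B') := hπ hB'meas
  have hμP : μ (π ⁻¹' B') = ν B' := by
    rw [← hpush, Measure.map_apply hπ hB'meas]
  have hint : ∫⁻ x in π ⁻¹' B',
      (∑ j ∈ Finset.range (M + 1), ((⇑T)^[j * n] ⁻¹' A).indicator (1 : X → ENNReal) x) ∂μ
      = ∑ j ∈ Finset.range (M + 1), μ ((⇑T)^[j * n] ⁻¹' A ∩ π ⁻¹' B') := by
    rw [lintegral_finset_sum _ fun j _ => measurable_one.indicator ((hTm.iterate _) hA)]
    refine Finset.sum_congr rfl fun j _ => ?_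
    rw [lintegral_indicator ((hTm.iterate _) hA)]
    simp only [Pi.one_apply]
    rw [setLIntegral_one, Measure.restrict_apply ((hTm.iterate _) hA)]
  have hupper : ∫⁻ x in π ⁻¹' B',
      (∑ j ∈ Finset.range (M + 1), ((⇑T)^[j * n] ⁻¹' A).indicator (1 : X → ENNReal) x) ∂μ
      ≤ ε * M * ν B' := by
    have hae : ∀ᵐ x ∂μ.restrict (π ⁻¹' B'),
        (∑ j ∈ Finset.range (M + 1), ((⇑T)^[j * n] ⁻¹' A).indicator (1 : X → ENNReal) x)
          ≤ ε * M := by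
      have h1 : ∀ᵐ x ∂μ.restrict (π ⁻¹' B'), x ∈ π ⁻¹' B' := ae_restrict_mem hPmeas
      have h2 : ∀ᵐ x ∂μ.restrict (π ⁻¹' B'), x ∉ N :=
        ae_restrict_of_ae (measure_eq_zero_iff_ae_notMem.mp hNnull)
      filter_upwards [h1, h2] with x hx1 hx2
      exact hle x hx1 hx2
    calc _ ≤ ∫⁻ _ in π ⁻¹' B', ε * M ∂μ := lintegral_mono_ae hae
      _ = ε * M * μ (π ⁻¹' B') := setLIntegral_const _ _
      _ = ε * M * ν B' := by rw [hμP]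
  have hlower : ((M + 1 : ℕ) : ENNReal) * (ε * ν B')
      ≤ ∑ j ∈ Finset.range (M + 1), μ ((⇑T)^[j * n] ⁻¹' A ∩ π ⁻¹' B') := by
    calc ((M + 1 : ℕ) : ENNReal) * (ε * ν B')
        = ∑ _j ∈ Finset.range (M + 1), ε * ν B' := by
          rw [Finset.sum_const, Finset.card_range, nsmul_eq_mul]
      _ ≤ _ := Finset.sum_le_sum key
  have hfinal : ((M + 1 : ℕ) : ENNReal) * (ε * ν B') ≤ (M : ENNReal) * (ε * ν B') := by
    calc ((M + 1 : ℕ) : ENNReal) * (ε * ν B')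
        ≤ ∑ j ∈ Finset.range (M + 1), μ ((⇑T)^[j * n] ⁻¹' A ∩ π ⁻¹' B') := hlower
      _ = _ := hint.symm
      _ ≤ ε * M * ν B' := hupper
      _ = (M : ENNReal) * (ε * ν B') := by ring
  have hc0 : ε * ν B' ≠ 0 := mul_ne_zero hε.ne' hB'pos.ne'
  have hctop : ε * ν B' ≠ ⊤ := ENNReal.mul_ne_top hεtop hB'top.ne
  have : ((M + 1 : ℕ) : ENNReal) ≤ (M : ENNReal) :=
    (ENNReal.mul_le_mul_iff_left hc0 hctop).mp hfinal
  have : M + 1 ≤ M := by exact_mod_cast this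
  omega
end

section
/- Assuming Furstenberg's multiple recurrence theorem (every invertible finite measure preserving transformation of a probability space is d-recurrent for every d), let T be an invertible measure preserving transformation (possibly of an infinite measure space), let A be a set with 0 < μ(A) < ∞, and let ε > 0; if there exist n ≥ 1 and arbitrarily large M with a subset E ⊆ {1,…,M}, |E| > εM, satisfying μ(⋂_{j∈E} T^{-jn}A) > 0, then T is d-recurrent on A for every d, i.e. for every d ≥ 1 there exists k ≥ 1 with μ(⋂_{i=0}^{d} T^{-ik}A) > 0. -/
open MeasureTheory Set Filter Topology
open scoped NNReal ENNReal

noncomputable section Stmt6Aux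

namespace Stmt6Aux

abbrev Om : Type := ℤ → Bool

/-- the shift map -/
def s : Om → Om := fun ω t => ω (t + 1)

def sinv : Om → Om := fun ω t => ω (t - 1)

def shiftE : Om ≃ Om where
  toFun := s
  invFun := sinv
  left_inv ω := by funext t; simp [s, sinv]
  right_inv ω := by funext t; simp [s, sinv]

lemma s_cont : Continuous s := continuous_pi fun t => continuous_apply (t + 1)
lemma sinv_cont : Continuous sinv := continuous_pi fun t => continuous_apply (t - 1)

def shiftH : Om ≃ₜ Om :=
  { shiftE with continuous_toFun := s_cont, continuous_invFun := sinv_cont }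

lemma s_iterate (m : ℕ) (ω : Om) (t : ℤ) : s^[m] ω t = ω (t + m) := by
  induction m generalizing ω t with
  | zero => simp
  | succ m ih =>
    rw [Function.iterate_succ_apply, ih]
    show ω ((t + (m : ℤ)) + 1) = _
    congr 1
    push_cast
    ring


/-- the base cylinder set -/
def AZ : Set Om := {ω | ω 0 = true}

lemma AZ_isOpen : IsOpen AZ := by
  have : AZ = (fun ω : Om => ω 0) ⁻¹' {true} := rfl
  rw [this]
  exact (continuous_apply 0).isOpen_preimage _ (isOpen_discrete _)

lemma AZ_isClosed : IsClosed AZ := by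
  have : AZ = (fun ω : Om => ω 0) ⁻¹' {true} := rfl
  rw [this]
  exact IsClosed.preimage (continuous_apply 0) (isClosed_discrete _)

section

variable (E : ℕ → Finset ℕ) (Ms : ℕ → ℕ)

/-- the point of the Cantor space encoding `E N` -/
def omseq (N : ℕ) : Om := fun t => decide (1 ≤ t ∧ t.toNat ∈ E N)

/-- index set: times `j ∈ [1, Ms N]` at which the orbit of `omseq E N` lies in `S` -/
def idx (N : ℕ) (S : Set Om) : Finset ℕ :=
  @Finset.filter _ (fun j => s^[j] (omseq E N) ∈ S) (fun _ => Classical.propDecidable _)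
    (Finset.Icc 1 (Ms N))

lemma mem_idx {N : ℕ} {S : Set Om} {j : ℕ} :
    j ∈ idx E Ms N S ↔ j ∈ Finset.Icc 1 (Ms N) ∧ s^[j] (omseq E N) ∈ S := by
  simp [idx, Finset.mem_filter]

lemma idx_subset (N : ℕ) (S : Set Om) : idx E Ms N S ⊆ Finset.Icc 1 (Ms N) := by
  intro j hj
  exact ((mem_idx E Ms).1 hj).1

/-- empirical density of the orbit of `omseq E N` in `S`, along times `1,…,Ms N` -/
def cnt (N : ℕ) (S : Set Om) : ℝ≥0 :=
  ((idx E Ms N S).card : ℝ≥0) * ((Ms N : ℝ≥0))⁻¹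

lemma cnt_le_one (N : ℕ) (S : Set Om) : cnt E Ms N S ≤ 1 := by
  rcases eq_or_ne (Ms N) 0 with h | h
  · simp [cnt, h]
  · unfold cnt
    calc ((idx E Ms N S).card : ℝ≥0) * ((Ms N : ℝ≥0))⁻¹
        ≤ ((Ms N : ℝ≥0)) * ((Ms N : ℝ≥0))⁻¹ := by
          apply mul_le_mul_left
          have h1 := Finset.card_le_card (idx_subset E Ms N S)
          have hIcc : (Finset.Icc 1 (Ms N)).card = Ms N := by
            rw [Nat.card_Icc]; omega
          exact_mod_cast h1.trans (le_of_eq hIcc)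
        _ = 1 := by
          rw [mul_inv_cancel₀]
          exact_mod_cast h

lemma cnt_mono (N : ℕ) {S S' : Set Om} (h : S ⊆ S') : cnt E Ms N S ≤ cnt E Ms N S' := by
  apply mul_le_mul_left
  have hsub : idx E Ms N S ⊆ idx E Ms N S' := by
    intro j hj
    rw [mem_idx] at hj ⊢
    exact ⟨hj.1, h hj.2⟩
  exact_mod_cast Finset.card_le_card hsub

lemma idx_union (N : ℕ) (S S' : Set Om) :
    idx E Ms N (S ∪ S') = idx E Ms N S ∪ idx E Ms N S' := by
  ext j
  simp only [mem_idx, Finset.mem_union, Set.mem_union]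
  tauto

lemma cnt_union (N : ℕ) {S S' : Set Om} (h : Disjoint S S') :
    cnt E Ms N (S ∪ S') = cnt E Ms N S + cnt E Ms N S' := by
  unfold cnt
  rw [← add_mul]
  congr 1
  rw [idx_union, Finset.card_union_of_disjoint]
  · push_cast; ring
  · rw [Finset.disjoint_left]
    intro j hj hj'
    rw [mem_idx] at hj hj'
    exact (h.le_bot ⟨hj.2, hj'.2⟩ : False)

lemma cnt_union_le (N : ℕ) (S S' : Set Om) :
    cnt E Ms N (S ∪ S') ≤ cnt E Ms N S + cnt E Ms N S' := by
  unfold cnt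
  rw [← add_mul]
  apply mul_le_mul_left
  rw [idx_union]
  exact_mod_cast Finset.card_union_le _ _

lemma cnt_univ (N : ℕ) (h : Ms N ≠ 0) : cnt E Ms N univ = 1 := by
  unfold cnt
  have : idx E Ms N univ = Finset.Icc 1 (Ms N) := by
    ext j
    simp [mem_idx]
  rw [this, Nat.card_Icc]
  have h2 : (Ms N + 1 - 1) = Ms N := by omega
  rw [h2, mul_inv_cancel₀]
  exact_mod_cast h

lemma idx_shift_card_le (N : ℕ) (S : Set Om) :
    (idx E Ms N (s ⁻¹' S)).card ≤ (idx E Ms N S).card + 1 := by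
  have himg : (idx E Ms N (s ⁻¹' S)).image (· + 1) ⊆ idx E Ms N S ∪ {Ms N + 1} := by
    intro x hx
    rw [Finset.mem_image] at hx
    obtain ⟨j, hj, rfl⟩ := hx
    rw [mem_idx] at hj
    obtain ⟨hj1, hj2⟩ := hj
    rw [Finset.mem_Icc] at hj1
    rcases eq_or_lt_of_le hj1.2 with h | h
    · exact Finset.mem_union_right _ (by simp [h])
    · apply Finset.mem_union_left
      rw [mem_idx, Finset.mem_Icc]
      refine ⟨⟨by omega, by omega⟩, ?_⟩
      rw [Function.iterate_succ_apply']
      exact hj2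
  have h1 : (idx E Ms N (s ⁻¹' S)).card = ((idx E Ms N (s ⁻¹' S)).image (· + 1)).card :=
    (Finset.card_image_of_injective _ (add_left_injective 1)).symm
  calc (idx E Ms N (s ⁻¹' S)).card
      = ((idx E Ms N (s ⁻¹' S)).image (· + 1)).card := h1
    _ ≤ (idx E Ms N S ∪ {Ms N + 1}).card := Finset.card_le_card himg
    _ ≤ (idx E Ms N S).card + 1 := by
        refine (Finset.card_union_le _ _).trans ?_
        simp

lemma card_le_idx_shift (N : ℕ) (S : Set Om) :
    (idx E Ms N S).card ≤ (idx E Ms N (s ⁻¹' S)).card + 1 := by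
  have hsub : idx E Ms N S ⊆ (idx E Ms N (s ⁻¹' S)).image (· + 1) ∪ {1} := by
    intro j hj
    rw [mem_idx] at hj
    obtain ⟨hj1, hj2⟩ := hj
    rw [Finset.mem_Icc] at hj1
    rcases eq_or_lt_of_le hj1.1 with h | h
    · exact Finset.mem_union_right _ (by simp [← h])
    · apply Finset.mem_union_left
      rw [Finset.mem_image]
      refine ⟨j - 1, ?_, by omega⟩
      rw [mem_idx, Finset.mem_Icc]
      refine ⟨⟨by omega, by omega⟩, ?_⟩
      have hgoal : s^[j-1+1] (omseq E N) = s (s^[j-1] (omseq E N)) :=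
        Function.iterate_succ_apply' s (j-1) _
      show s (s^[j-1] (omseq E N)) ∈ S
      rw [← hgoal]
      have hj' : j - 1 + 1 = j := by omega
      rw [hj']
      exact hj2
  calc (idx E Ms N S).card
      ≤ ((idx E Ms N (s ⁻¹' S)).image (· + 1) ∪ {1}).card := Finset.card_le_card hsub
    _ ≤ ((idx E Ms N (s ⁻¹' S)).image (· + 1)).card + 1 := by
        refine (Finset.card_union_le _ _).trans ?_
        simp
    _ ≤ (idx E Ms N (s ⁻¹' S)).card + 1 := by
        simp [Finset.card_image_of_injective _ (add_left_injective 1)]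

lemma cnt_shift_le (N : ℕ) (S : Set Om) :
    cnt E Ms N (s ⁻¹' S) ≤ cnt E Ms N S + ((Ms N : ℝ≥0))⁻¹ := by
  have : cnt E Ms N S + ((Ms N : ℝ≥0))⁻¹
      = (((idx E Ms N S).card : ℝ≥0) + 1) * ((Ms N : ℝ≥0))⁻¹ := by
    unfold cnt; ring
  rw [this]
  unfold cnt
  apply mul_le_mul_left
  exact_mod_cast idx_shift_card_le E Ms N S

lemma cnt_le_shift (N : ℕ) (S : Set Om) :
    cnt E Ms N S ≤ cnt E Ms N (s ⁻¹' S) + ((Ms N : ℝ≥0))⁻¹ := by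
  have : cnt E Ms N (s ⁻¹' S) + ((Ms N : ℝ≥0))⁻¹
      = (((idx E Ms N (s ⁻¹' S)).card : ℝ≥0) + 1) * ((Ms N : ℝ≥0))⁻¹ := by
    unfold cnt; ring
  rw [this]
  unfold cnt
  apply mul_le_mul_left
  exact_mod_cast card_le_idx_shift E Ms N S

variable (U : Ultrafilter ℕ)

/-- the ultrafilter-limit density -/
def phi (S : Set Om) : ℝ≥0 := lim (Ultrafilter.map (fun N => cnt E Ms N S) U : Filter ℝ≥0)

lemma tendsto_cnt (S : Set Om) :
    Filter.Tendsto (fun N => cnt E Ms N S) ↑U (𝓝 (phi E Ms U S)) := by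
  have hle : (Ultrafilter.map (fun N => cnt E Ms N S) U : Filter ℝ≥0) ≤ 𝓟 (Icc 0 1) := by
    rw [le_principal_iff]
    rw [Ultrafilter.coe_map, Filter.mem_map]
    apply Filter.Eventually.mono (Filter.Eventually.of_forall (fun N => trivial))
    intro N _
    exact Set.mem_Icc.2 ⟨zero_le, cnt_le_one E Ms N S⟩
  obtain ⟨a, -, ha⟩ := (isCompact_Icc (a := (0:ℝ≥0)) (b := 1)).ultrafilter_le_nhds _ hle
  have := le_nhds_lim ⟨a, ha⟩
  rw [show Filter.Tendsto (fun N => cnt E Ms N S) ↑U _ ↔ _ from Iff.rfl]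
  exact this

lemma phi_eq {S : Set Om} {x : ℝ≥0}
    (h : Filter.Tendsto (fun N => cnt E Ms N S) ↑U (𝓝 x)) : phi E Ms U S = x :=
  tendsto_nhds_unique (tendsto_cnt E Ms U S) h

lemma phi_mono {S S' : Set Om} (h : S ⊆ S') : phi E Ms U S ≤ phi E Ms U S' :=
  le_of_tendsto_of_tendsto' (tendsto_cnt E Ms U S) (tendsto_cnt E Ms U S')
    (fun N => cnt_mono E Ms N h)

lemma phi_le_one (S : Set Om) : phi E Ms U S ≤ 1 :=
  le_of_tendsto' (tendsto_cnt E Ms U S) (fun N => cnt_le_one E Ms N S)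

lemma phi_union {S S' : Set Om} (h : Disjoint S S') :
    phi E Ms U (S ∪ S') = phi E Ms U S + phi E Ms U S' :=
  phi_eq E Ms U (((tendsto_cnt E Ms U S).add (tendsto_cnt E Ms U S')).congr
    (fun N => (cnt_union E Ms N h).symm))

lemma phi_union_le (S S' : Set Om) :
    phi E Ms U (S ∪ S') ≤ phi E Ms U S + phi E Ms U S' :=
  le_of_tendsto_of_tendsto' (tendsto_cnt E Ms U (S ∪ S'))
    ((tendsto_cnt E Ms U S).add (tendsto_cnt E Ms U S'))
    (fun N => cnt_union_le E Ms N S S')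

variable (hU : ↑U ≤ Filter.atTop (α := ℕ)) (hM : ∀ N, N ≤ Ms N)

include hU hM

lemma phi_univ : phi E Ms U univ = 1 := by
  apply phi_eq
  apply Filter.Tendsto.congr' _ (tendsto_const_nhds (x := (1:ℝ≥0)))
  have hev : ∀ᶠ N in (↑U : Filter ℕ), 1 ≤ N := hU (Filter.eventually_ge_atTop 1)
  filter_upwards [hev] with N hN
  exact (cnt_univ E Ms N (by have := hM N; omega)).symm

lemma phi_le_of_cnt_le {S S' : Set Om}
    (h : ∀ N, cnt E Ms N S ≤ cnt E Ms N S' + ((Ms N : ℝ≥0))⁻¹) :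
    phi E Ms U S ≤ phi E Ms U S' := by
  apply le_of_forall_pos_le_add
  intro δ hδ
  have hev : ∀ᶠ N in (↑U : Filter ℕ), cnt E Ms N S ≤ cnt E Ms N S' + δ := by
    obtain ⟨N₀, hN₀⟩ := exists_nat_gt (δ⁻¹ : ℝ≥0)
    have hev1 : ∀ᶠ N in (↑U : Filter ℕ), N₀ + 1 ≤ N := hU (Filter.eventually_ge_atTop (N₀ + 1))
    filter_upwards [hev1] with N hN
    refine (h N).trans (add_le_add_right ?_ _)
    have hMN : (N₀ : ℝ≥0) + 1 ≤ (Ms N : ℝ≥0) := by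
      have h1 : N₀ + 1 ≤ Ms N := le_trans hN (hM N)
      exact_mod_cast h1
    have hpos : (0:ℝ≥0) < (N₀ : ℝ≥0) + 1 := by positivity
    calc ((Ms N : ℝ≥0))⁻¹ ≤ ((N₀ : ℝ≥0) + 1)⁻¹ := by gcongr
      _ ≤ δ := by
          apply inv_le_of_inv_le₀ hδ
          exact le_trans hN₀.le (by simp)
  exact le_of_tendsto_of_tendsto (tendsto_cnt E Ms U S)
    ((tendsto_cnt E Ms U S').add tendsto_const_nhds) hev

lemma phi_shift (S : Set Om) : phi E Ms U (s ⁻¹' S) = phi E Ms U S :=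
  le_antisymm
    (phi_le_of_cnt_le E Ms U hU hM (fun N => cnt_shift_le E Ms N S))
    (phi_le_of_cnt_le E Ms U hU hM (fun N => cnt_le_shift E Ms N S))

lemma phi_sinv (S : Set Om) : phi E Ms U (sinv ⁻¹' S) = phi E Ms U S := by
  have h1 := phi_shift E Ms U hU hM (sinv ⁻¹' S)
  have h2 : s ⁻¹' (sinv ⁻¹' S) = S := by
    ext ω
    have : sinv (s ω) = ω := shiftE.left_inv ω
    simp only [Set.mem_preimage, this]
  rw [h2] at h1
  exact h1.symm

lemma phi_image (S : Set Om) : phi E Ms U (s '' S) = phi E Ms U S := by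
  have h : s '' S = sinv ⁻¹' S := by
    ext ω
    constructor
    · rintro ⟨ω', hω', rfl⟩
      have : sinv (s ω') = ω' := shiftE.left_inv ω'
      simpa [Set.mem_preimage, this]
    · intro hω
      refine ⟨sinv ω, hω, ?_⟩
      exact shiftE.right_inv ω
  rw [h]
  exact phi_sinv E Ms U hU hM S

end



/-- the correspondence content -/
def con (E : ℕ → Finset ℕ) (Ms : ℕ → ℕ) (U : Ultrafilter ℕ) : Content Om where
  toFun K := phi E Ms U K
  mono' K₁ K₂ h := phi_mono E Ms U h
  sup_disjoint' K₁ K₂ h _ _ := by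
    show phi E Ms U (↑(K₁ ⊔ K₂)) = _
    rw [TopologicalSpace.Compacts.coe_sup]
    exact phi_union E Ms U h
  sup_le' K₁ K₂ := by
    show phi E Ms U (↑(K₁ ⊔ K₂)) ≤ _
    rw [TopologicalSpace.Compacts.coe_sup]
    exact phi_union_le E Ms U _ _

section

variable (E : ℕ → Finset ℕ) (Ms : ℕ → ℕ) (U : Ultrafilter ℕ)

/-- the correspondence measure -/
def meas : Measure Om := (con E Ms U).measure

lemma meas_open_le {C : Set Om} (hC : IsOpen C) :
    meas E Ms U C ≤ ((phi E Ms U C : ℝ≥0) : ℝ≥0∞) := by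
  rw [meas, Content.measure_apply _ hC.measurableSet,
    Content.outerMeasure_of_isOpen _ _ hC]
  refine iSup_le fun K => iSup_le fun hK => ?_
  exact ENNReal.coe_le_coe.2 (phi_mono E Ms U hK)

lemma le_meas_compact {C : Set Om} (hC : IsCompact C) (hm : MeasurableSet C) :
    ((phi E Ms U C : ℝ≥0) : ℝ≥0∞) ≤ meas E Ms U C := by
  rw [meas, Content.measure_apply _ hm]
  exact (con E Ms U).le_outerMeasure_compacts ⟨C, hC⟩

variable (hU : ↑U ≤ Filter.atTop (α := ℕ)) (hM : ∀ N, N ≤ Ms N)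

include hU hM

lemma meas_prob : IsProbabilityMeasure (meas E Ms U) := by
  constructor
  apply le_antisymm
  · refine le_trans (meas_open_le E Ms U isOpen_univ) ?_
    rw [phi_univ E Ms U hU hM]
    simp
  · have h := le_meas_compact E Ms U isCompact_univ MeasurableSet.univ
    refine le_trans ?_ h
    rw [phi_univ E Ms U hU hM]
    simp

lemma meas_preserving : MeasurePreserving s (meas E Ms U) (meas E Ms U) := by
  refine ⟨s_cont.measurable, ?_⟩
  ext Sset hS
  rw [Measure.map_apply s_cont.measurable hS]
  rw [meas, Content.measure_apply _ (hS.preimage s_cont.measurable),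
    Content.measure_apply _ hS]
  have hinv : ∀ ⦃K : TopologicalSpace.Compacts Om⦄,
      (con E Ms U) (K.map shiftH shiftH.continuous) = (con E Ms U) K := by
    intro K
    show ((phi E Ms U (K.map shiftH shiftH.continuous) : ℝ≥0) : ℝ≥0∞) = _
    rw [TopologicalSpace.Compacts.coe_map]
    exact congrArg _ (phi_image E Ms U hU hM K)
  exact (con E Ms U).outerMeasure_preimage shiftH hinv Sset

end

section

variable (E : ℕ → Finset ℕ) (Ms : ℕ → ℕ)

lemma omseq_true_iff (N : ℕ) (hEN : E N ⊆ Finset.Icc 1 (Ms N)) (j : ℕ) :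
    (omseq E N ((j : ℤ)) = true) ↔ j ∈ E N := by
  simp only [omseq, decide_eq_true_eq]
  constructor
  · rintro ⟨h1, h2⟩
    simpa using h2
  · intro hj
    have hmem := hEN hj
    rw [Finset.mem_Icc] at hmem
    refine ⟨by exact_mod_cast hmem.1, by simpa using hj⟩

lemma idx_AZ (N : ℕ) (hEN : E N ⊆ Finset.Icc 1 (Ms N)) : idx E Ms N AZ = E N := by
  ext j
  rw [mem_idx]
  constructor
  · rintro ⟨hj, hA⟩
    have h0 : s^[j] (omseq E N) 0 = true := hA
    rw [s_iterate, show ((0:ℤ) + j) = (j:ℤ) by ring] at h0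
    exact (omseq_true_iff E Ms N hEN j).1 h0
  · intro hj
    refine ⟨hEN hj, ?_⟩
    show s^[j] (omseq E N) 0 = true
    rw [s_iterate, show ((0:ℤ) + j) = (j:ℤ) by ring]
    exact (omseq_true_iff E Ms N hEN j).2 hj

variable (U : Ultrafilter ℕ)

lemma phi_AZ_pos {ε : ℝ} (hε : 0 < ε) (hE : ∀ N, E N ⊆ Finset.Icc 1 (Ms N))
    (hcard : ∀ N, ε * (Ms N : ℝ) < ((E N).card : ℝ)) :
    0 < phi E Ms U AZ := by
  have hMne : ∀ N, Ms N ≠ 0 := by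
    intro N hMN
    have h1 := hcard N
    have h2 : E N = ∅ := by
      have h3 := hE N
      rw [hMN] at h3
      rw [show Finset.Icc 1 0 = (∅ : Finset ℕ) from Finset.Icc_eq_empty (by omega)] at h3
      exact Finset.subset_empty.1 h3
    rw [h2, hMN] at h1
    simp only [Nat.cast_zero, mul_zero, Finset.card_empty, Nat.cast_zero] at h1
    exact absurd h1 (by norm_num)
  have hε'pos : 0 < Real.toNNReal ε := Real.toNNReal_pos.2 hε
  have hle : ∀ N, Real.toNNReal ε ≤ cnt E Ms N AZ := by
    intro N
    unfold cnt
    rw [idx_AZ E Ms N (hE N)]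
    rw [← NNReal.coe_le_coe]
    push_cast
    rw [Real.coe_toNNReal _ hε.le]
    have hMpos : (0:ℝ) < (Ms N : ℝ) := by
      exact_mod_cast Nat.pos_of_ne_zero (hMne N)
    rw [← div_eq_mul_inv, le_div_iff₀ hMpos]
    exact (hcard N).le
  exact lt_of_lt_of_le hε'pos (ge_of_tendsto' (tendsto_cnt E Ms U AZ) hle)

lemma exists_orbit_mem {S : Set Om} (hpos : 0 < phi E Ms U S) :
    ∃ N j, j ∈ Finset.Icc 1 (Ms N) ∧ s^[j] (omseq E N) ∈ S := by
  have hev : ∀ᶠ N in (↑U : Filter ℕ), 0 < cnt E Ms N S :=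
    (tendsto_cnt E Ms U S).eventually (eventually_gt_nhds hpos)
  obtain ⟨N, hN⟩ := hev.exists
  have hne : (idx E Ms N S).Nonempty := by
    by_contra h
    rw [Finset.not_nonempty_iff_eq_empty] at h
    unfold cnt at hN
    rw [h] at hN
    simp at hN
  obtain ⟨j, hj⟩ := hne
  rw [mem_idx] at hj
  exact ⟨N, j, hj.1, hj.2⟩

end

end Stmt6Aux

open Stmt6Aux in
/-- Deduction step: assuming Furstenberg's multiple recurrence theorem for
probability spaces (used via the finitary Szemerédi theorem), if for some
`n ≥ 1` there are arbitrarily large `M` and `E ⊆ {1,…,M}` with `|E| > εM` and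
`μ(⋂_{j∈E} T^{-jn}A) > 0`, then `T` is `d`-recurrent on `A` for every `d ≥ 1`. -/
theorem stmt_6 {X : Type*} [MeasurableSpace X]
    (furstenberg : ∀ (Z : Type) (_ : MeasurableSpace Z) (m : Measure Z),
      IsProbabilityMeasure m → ∀ R : Z ≃ Z, Measurable R → Measurable R.symm →
      MeasurePreserving R m m → ∀ d : ℕ, 1 ≤ d →
      ∀ A : Set Z, MeasurableSet A → 0 < m A →
      ∃ k : ℕ, 1 ≤ k ∧ 0 < m (⋂ i ∈ Finset.range (d + 1), (⇑R)^[i * k] ⁻¹' A))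
    (μ : Measure X) [SigmaFinite μ]
    (T : Equiv.Perm X) (hTm : Measurable T) (hTm' : Measurable T.symm)
    (hT : MeasurePreserving T μ μ)
    (A : Set X) (hA : MeasurableSet A) (hApos : 0 < μ A) (hAfin : μ A < ⊤)
    (ε : ℝ) (hε : 0 < ε)
    (hdensity : ∃ n : ℕ, 1 ≤ n ∧ ∀ M₀ : ℕ, ∃ M : ℕ, M₀ ≤ M ∧
      ∃ E ⊆ Finset.Icc 1 M, ε * M < (E.card : ℝ) ∧
        0 < μ (⋂ j ∈ E, (⇑T)^[j * n] ⁻¹' A)) :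
    ∀ d : ℕ, 1 ≤ d →
      ∃ k : ℕ, 1 ≤ k ∧ 0 < μ (⋂ i ∈ Finset.range (d + 1), (⇑T)^[i * k] ⁻¹' A) := by
  intro d hd
  obtain ⟨n, hn, hMex⟩ := hdensity
  choose Ms hMs E hE hcard hpos using hMex
  set U : Ultrafilter ℕ := Ultrafilter.of Filter.atTop with hUdef
  have hU : (↑U : Filter ℕ) ≤ Filter.atTop := Ultrafilter.of_le _
  have hprob := meas_prob E Ms U hU hMs
  have hpres : MeasurePreserving (⇑shiftE) (meas E Ms U) (meas E Ms U) :=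
    meas_preserving E Ms U hU hMs
  have hAZmeas : MeasurableSet AZ := AZ_isOpen.measurableSet
  have hAZpos : 0 < meas E Ms U AZ := by
    have h1 := le_meas_compact E Ms U (AZ_isClosed.isCompact) hAZmeas
    have h2 := phi_AZ_pos E Ms U hε hE hcard
    calc (0:ℝ≥0∞) < ((phi E Ms U AZ : ℝ≥0) : ℝ≥0∞) := by exact_mod_cast h2
      _ ≤ _ := h1
  obtain ⟨k, hk, hkpos⟩ := furstenberg Om inferInstance (meas E Ms U) hprob shiftE
    s_cont.measurable sinv_cont.measurable hpres d hd AZ hAZmeas hAZpos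
  set C : Set Om := ⋂ i ∈ Finset.range (d + 1), (⇑shiftE)^[i * k] ⁻¹' AZ with hCdef
  have hCopen : IsOpen C := by
    apply isOpen_biInter_finset
    intro i _
    exact AZ_isOpen.preimage (s_cont.iterate _)
  have hphiC : 0 < phi E Ms U C := by
    have h1 := meas_open_le E Ms U hCopen
    have h2 : (0:ℝ≥0∞) < ((phi E Ms U C : ℝ≥0) : ℝ≥0∞) := lt_of_lt_of_le hkpos h1
    exact_mod_cast h2
  obtain ⟨N, j, hjIcc, hjC⟩ := exists_orbit_mem E Ms U hphiC
  have hAP : ∀ i ∈ Finset.range (d + 1), j + i * k ∈ E N := by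
    intro i hi
    have h1 : s^[j] (omseq E N) ∈ (⇑shiftE)^[i * k] ⁻¹' AZ := by
      rw [hCdef] at hjC
      exact Set.mem_iInter₂.1 hjC i hi
    have h2 : s^[i * k] (s^[j] (omseq E N)) ∈ AZ := h1
    rw [← Function.iterate_add_apply] at h2
    have h3 : s^[i * k + j] (omseq E N) 0 = true := h2
    rw [s_iterate, show ((0:ℤ) + ((i * k + j : ℕ) : ℤ)) = ((i * k + j : ℕ) : ℤ) by ring] at h3
    have h4 := (omseq_true_iff E Ms N (hE N) (i * k + j)).1 h3
    rwa [Nat.add_comm] at h4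
  refine ⟨k * n, ?_, ?_⟩
  · calc 1 = 1 * 1 := by ring
      _ ≤ k * n := Nat.mul_le_mul hk hn
  · have hKmeas : MeasurableSet (⋂ i ∈ Finset.range (d + 1), (⇑T)^[i * (k * n)] ⁻¹' A) := by
      apply MeasurableSet.biInter (Finset.range (d + 1)).countable_toSet
      intro i _
      exact (hTm.iterate _) hA
    have hsub : (⋂ j' ∈ E N, (⇑T)^[j' * n] ⁻¹' A) ⊆
        (⇑T)^[j * n] ⁻¹' (⋂ i ∈ Finset.range (d + 1), (⇑T)^[i * (k * n)] ⁻¹' A) := by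
      intro x hx
      rw [Set.mem_preimage, Set.mem_iInter₂]
      intro i hi
      show (⇑T)^[i * (k * n)] ((⇑T)^[j * n] x) ∈ A
      rw [← Function.iterate_add_apply, show i * (k * n) + j * n = (j + i * k) * n by ring]
      exact Set.mem_iInter₂.1 hx (j + i * k) (hAP i hi)
    have h5 : 0 < μ ((⇑T)^[j * n] ⁻¹'
        (⋂ i ∈ Finset.range (d + 1), (⇑T)^[i * (k * n)] ⁻¹' A)) :=
      lt_of_lt_of_le (hpos N) (measure_mono hsub)
    rwa [(hT.iterate (j * n)).measure_preimage hKmeas.nullMeasurableSet] at h5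
end Stmt6Aux
end

section
/- Let T be an invertible measure preserving extension of S via π with disintegration (μ_y). Let A ∈ B with μ(A) > 0, ε > 0, B = {y : μ_y(A) > ε} with ν(B) > 0. Fix l ≥ 1 and n ∈ ℤ, and for k̄ = (k₁,…,k_l) ∈ {1,…,N}^l let q_{k̄}(x) = Σ_j k_j x^j. If ν(⋂_{k̄ ∈ {1,…,N}^l} S^{-q_{k̄}(n)} B) > 0, then there exists E ⊆ {1,…,N}^l with |E| ≥ εN^l such that μ(⋂_{k̄ ∈ E} T^{-q_{k̄}(n)} A) > 0. -/
/-!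
Equivariance of the disintegration, `μ_{S^q y}(A) = μ_y(T^{-q} A)`, turns the recurrence
hypothesis into a set of fibres `y` of positive `ν`-measure on which every `T^{-q_k(n)} A` has
`μ_y`-measure `> ε`. On such a fibre the number of these sets containing `x` has `μ_y`-integral
`> ε N^l`, so on a set of positive `μ_y`-measure `x` lies in at least `ε N^l` of them. There are
only finitely many candidate index sets `E`, so one of them serves a set of fibres of positive
measure, and integrating over `y` gives `μ(⋂_{k ∈ E} T^{-q_k(n)} A) > 0`.
-/

open MeasureTheory

/-- The value `q_{k̄}(n) = Σ_{j=1}^l k_j n^j` for `k̄ ∈ ℕ^l`. -/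
def qVal {l : ℕ} (kk : Fin l → ℕ) (n : ℤ) : ℤ :=
  ∑ j : Fin l, (kk j : ℤ) * n ^ ((j : ℕ) + 1)

open Filter Finset

namespace Equiv.Perm

variable {α β : Type*} [MeasurableSpace α] {μ : Measure α}

theorem measurePreserving_inv {e : Perm α} (he : MeasurePreserving e μ μ)
    (he' : Measurable e.symm) : MeasurePreserving ⇑e⁻¹ μ μ :=
  MeasurePreserving.symm ⟨e, he.measurable, he'⟩ he

theorem measurePreserving_zpow {e : Perm α} (he : MeasurePreserving e μ μ)
    (he' : Measurable e.symm) (q : ℤ) : MeasurePreserving ⇑(e ^ q) μ μ := by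
  induction q using Int.induction_on with
  | zero => simpa using MeasurePreserving.id μ
  | succ i ih => rw [zpow_add_one, coe_mul]; exact ih.comp he
  | pred i ih => rw [zpow_sub_one, coe_mul]; exact ih.comp (measurePreserving_inv he he')

theorem measurable_zpow_symm {e : Perm α} (he : MeasurePreserving e μ μ)
    (he' : Measurable e.symm) (q : ℤ) : Measurable (e ^ q).symm := by
  rw [← inv_def, ← zpow_neg]
  exact (measurePreserving_zpow he he' (-q)).measurable

omit [MeasurableSpace α] in
theorem semiconj_zpow {f : α → β} {e : Perm α} {e' : Perm β} (h : Function.Semiconj f e e')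
    (q : ℤ) : Function.Semiconj f ⇑(e ^ q) ⇑(e' ^ q) := by
  induction q using Int.induction_on with
  | zero => simpa using Function.Semiconj.id_right
  | succ i ih => rw [zpow_add_one, zpow_add_one, coe_mul, coe_mul]; exact ih.comp_right h
  | pred i ih =>
    rw [zpow_sub_one, zpow_sub_one, coe_mul, coe_mul]
    exact ih.comp_right (h.inverses_right e.right_inv e'.left_inv)

end Equiv.Perm

theorem exists_le_card_measure_biInter_pos {ι α : Type*} [MeasurableSpace α]
    (ρ : Measure α) [IsProbabilityMeasure ρ] (P : Finset ι) {s : ι → Set α}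
    (hs : ∀ i ∈ P, MeasurableSet (s i)) {ε : ENNReal} (hε : ∀ i ∈ P, ε < ρ (s i)) :
    ∃ E ⊆ P, ε * #P ≤ #E ∧ 0 < ρ (⋂ i ∈ E, s i) := by
  classical
  rcases P.eq_empty_or_nonempty with rfl | hP
  · exact ⟨∅, subset_rfl, by simp, by simp⟩
  have hlt : ε * #P < ∫⁻ x, (#{i ∈ P | x ∈ s i} : ENNReal) ∂ρ := by
    calc ε * #P = ∑ i ∈ P, ε := by rw [sum_const, nsmul_eq_mul, mul_comm]
      _ < ∑ i ∈ P, ρ (s i) := ENNReal.sum_lt_sum_of_nonempty hP hε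
      _ = ∫⁻ x, ∑ i ∈ P, (s i).indicator 1 x ∂ρ := by
        rw [lintegral_finsetSum _ fun i hi => measurable_one.indicator (hs i hi)]
        exact sum_congr rfl fun i hi => (lintegral_indicator_one (hs i hi)).symm
      _ = ∫⁻ x, (#{i ∈ P | x ∈ s i} : ENNReal) ∂ρ := by
        congr 1 with x
        rw [card_filter, Nat.cast_sum]
        exact sum_congr rfl fun i _ => by by_cases hx : x ∈ s i <;> simp [hx]
  have hfreq : ∃ᵐ x ∂ρ, ε * #P < #{i ∈ P | x ∈ s i} := by
    by_contra h
    have hle := lintegral_mono_ae ((not_frequently.1 h).mono fun _ hx => not_lt.1 hx)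
    rw [lintegral_const, measure_univ, mul_one] at hle
    exact hle.not_gt hlt
  have hfreqE : ∃ᵐ x ∂ρ, ∃ E ∈ P.powerset, ε * #P ≤ #E ∧ x ∈ ⋂ i ∈ E, s i :=
    hfreq.mono fun x hx => ⟨{i ∈ P | x ∈ s i}, mem_powerset.2 (filter_subset _ _), hx.le,
      Set.mem_iInter₂.2 fun i hi => (mem_filter.1 hi).2⟩
  obtain ⟨E, hE, hfE⟩ := P.powerset.frequently_exists.1 hfreqE
  rw [frequently_and_distrib_left] at hfE
  exact ⟨E, mem_powerset.1 hE, hfE.1, pos_iff_ne_zero.2 (frequently_ae_mem_iff.1 hfE.2)⟩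

section Disintegration

variable {X Y : Type*} [MeasurableSpace X] [MeasurableSpace Y] {μ : Measure X} {ν : Measure Y}
  {π : X → Y} {κ : Y → Measure X}

theorem ae_apply_univ_eq_one [SigmaFinite ν] (hπ : Measurable π) (hpush : Measure.map π μ = ν)
    (hκmeas : ∀ A : Set X, MeasurableSet A → Measurable fun y => κ y A)
    (hκdis : ∀ B : Set Y, MeasurableSet B → ∀ A : Set X, MeasurableSet A →
      ∫⁻ y in B, κ y A ∂ν = μ (A ∩ π ⁻¹' B)) :
    ∀ᵐ y ∂ν, κ y Set.univ = 1 := by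
  refine ae_eq_of_forall_setLIntegral_eq_of_sigmaFinite (hκmeas _ MeasurableSet.univ)
    measurable_const fun s hs _ => ?_
  rw [hκdis s hs _ MeasurableSet.univ, Set.univ_inter, setLIntegral_const, one_mul, ← hpush,
    Measure.map_apply hπ hs]

theorem ae_apply_comp_eq_apply_preimage [SigmaFinite ν] (hπ : Measurable π)
    (hκmeas : ∀ A : Set X, MeasurableSet A → Measurable fun y => κ y A)
    (hκdis : ∀ B : Set Y, MeasurableSet B → ∀ A : Set X, MeasurableSet A →
      ∫⁻ y in B, κ y A ∂ν = μ (A ∩ π ⁻¹' B))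
    {S : Equiv.Perm Y} (hS : MeasurePreserving S ν ν) (hS' : Measurable S.symm)
    {T : Equiv.Perm X} (hT : MeasurePreserving T μ μ) (hcomm : Function.Semiconj π T S)
    {A : Set X} (hA : MeasurableSet A) :
    ∀ᵐ y ∂ν, κ (S y) A = κ y (T ⁻¹' A) := by
  have hTA : MeasurableSet (T ⁻¹' A) := hA.preimage hT.measurable
  refine ae_eq_of_forall_setLIntegral_eq_of_sigmaFinite ((hκmeas A hA).comp hS.measurable)
    (hκmeas _ hTA) fun s hs _ => ?_
  have hs' : MeasurableSet (S.symm ⁻¹' s) := hs.preimage hS'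
  calc ∫⁻ y in s, κ (S y) A ∂ν = ∫⁻ y in S.symm ⁻¹' s, κ y A ∂ν := by
        rw [← hS.setLIntegral_comp_preimage hs' (hκmeas A hA), Equiv.preimage_symm_preimage]
    _ = μ (A ∩ π ⁻¹' (S.symm ⁻¹' s)) := hκdis _ hs' A hA
    _ = μ (T ⁻¹' (A ∩ π ⁻¹' (S.symm ⁻¹' s))) :=
        (hT.measure_preimage (hA.inter (hs'.preimage hπ)).nullMeasurableSet).symm
    _ = μ (T ⁻¹' A ∩ π ⁻¹' s) := by
        congr 1; ext x; simp [hcomm.eq]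
    _ = ∫⁻ y in s, κ y (T ⁻¹' A) ∂ν := (hκdis s hs _ hTA).symm

theorem measure_pos_of_frequently_apply_pos
    (hκmeas : ∀ A : Set X, MeasurableSet A → Measurable fun y => κ y A)
    (hκdis : ∀ B : Set Y, MeasurableSet B → ∀ A : Set X, MeasurableSet A →
      ∫⁻ y in B, κ y A ∂ν = μ (A ∩ π ⁻¹' B))
    {A : Set X} (hA : MeasurableSet A) (h : ∃ᵐ y ∂ν, 0 < κ y A) : 0 < μ A := by
  have hμA := hκdis Set.univ MeasurableSet.univ A hA
  rw [Measure.restrict_univ, Set.preimage_univ, Set.inter_univ] at hμA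
  rw [← hμA, pos_iff_ne_zero, Ne, lintegral_eq_zero_iff (hκmeas A hA)]
  intro h0
  obtain ⟨y, hpos, hzero⟩ := (h.and_eventually h0).exists
  exact hpos.ne' hzero

end Disintegration

theorem stmt_8_general {X Y : Type*} [MeasurableSpace X] [MeasurableSpace Y]
    (μ : Measure X) (ν : Measure Y) [SigmaFinite ν]
    (S : Equiv.Perm Y) (hSm' : Measurable S.symm)
    (hS : MeasurePreserving S ν ν)
    (T : Equiv.Perm X) (hTm' : Measurable T.symm)
    (hT : MeasurePreserving T μ μ)
    (π : X → Y) (hπ : Measurable π) (hcomm : π ∘ ⇑T = ⇑S ∘ π)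
    (hpush : Measure.map π μ = ν)
    (κ : Y → Measure X)
    (hκmeas : ∀ A : Set X, MeasurableSet A → Measurable fun y => κ y A)
    (hκdis : ∀ B : Set Y, MeasurableSet B → ∀ A : Set X, MeasurableSet A →
      ∫⁻ y in B, κ y A ∂ν = μ (A ∩ π ⁻¹' B))
    (A : Set X) (hA : MeasurableSet A)
    (ε : ENNReal)
    (B : Set Y) (hB : B = {y : Y | ε < κ y A})
    (l N : ℕ) (n : ℤ)
    (hrec : 0 < ν (⋂ kk ∈ Fintype.piFinset (fun _ : Fin l => Finset.Icc 1 N),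
      ⇑(S ^ qVal kk n) ⁻¹' B)) :
    ∃ E ⊆ Fintype.piFinset (fun _ : Fin l => Finset.Icc 1 N),
      ε * (N : ENNReal) ^ l ≤ (E.card : ENNReal) ∧
      0 < μ (⋂ kk ∈ E, ⇑(T ^ qVal kk n) ⁻¹' A) := by
  classical
  set P := Fintype.piFinset fun _ : Fin l => Finset.Icc 1 N
  have hcardP : (#P : ENNReal) = N ^ l := by simp [P, Fintype.card_piFinset]
  have hTA : ∀ q : ℤ, MeasurableSet (⇑(T ^ q) ⁻¹' A) := fun q =>
    hA.preimage (Equiv.Perm.measurePreserving_zpow hT hTm' q).measurable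
  have hequiv : ∀ kk ∈ P, ∀ᵐ y ∂ν, κ ((S ^ qVal kk n) y) A = κ y (⇑(T ^ qVal kk n) ⁻¹' A) :=
    fun kk _ => ae_apply_comp_eq_apply_preimage hπ hκmeas hκdis
      (Equiv.Perm.measurePreserving_zpow hS hSm' _) (Equiv.Perm.measurable_zpow_symm hS hSm' _)
      (Equiv.Perm.measurePreserving_zpow hT hTm' _)
      (Equiv.Perm.semiconj_zpow (Function.semiconj_iff_comp_eq.2 hcomm) _) hA
  have hgood : ∃ᵐ y ∂ν, ∃ E ∈ P.powerset,
      ε * #P ≤ #E ∧ 0 < κ y (⋂ kk ∈ E, ⇑(T ^ qVal kk n) ⁻¹' A) := by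
    refine ((frequently_ae_mem_iff.2 hrec.ne').and_eventually
      ((ae_apply_univ_eq_one hπ hpush hκmeas hκdis).and ((eventually_all_finset P).2 hequiv))).mono ?_
    rintro y ⟨hyB, hy1, hy⟩
    have : IsProbabilityMeasure (κ y) := ⟨hy1⟩
    obtain ⟨E, hEP, hE⟩ := exists_le_card_measure_biInter_pos (κ y) P (fun kk _ => hTA _)
      fun kk hkk => by simpa [hB, hy kk hkk] using Set.mem_iInter₂.1 hyB kk hkk
    exact ⟨E, mem_powerset.2 hEP, hE⟩
  obtain ⟨E, hEP, hfE⟩ := P.powerset.frequently_exists.1 hgood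
  rw [frequently_and_distrib_left] at hfE
  exact ⟨E, mem_powerset.1 hEP, hcardP ▸ hfE.1, measure_pos_of_frequently_apply_pos hκmeas hκdis
    (E.measurableSet_biInter fun kk _ => hTA _) hfE.2⟩

/-- From polynomial recurrence of the base to a positive-density set of
polynomial return times in the fiber. -/
theorem stmt_8 {X Y : Type*} [MeasurableSpace X] [MeasurableSpace Y]
    (μ : Measure X) (ν : Measure Y) [SigmaFinite μ] [SigmaFinite ν]
    (S : Equiv.Perm Y) (hSm : Measurable S) (hSm' : Measurable S.symm)
    (hS : MeasurePreserving S ν ν)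
    (T : Equiv.Perm X) (hTm : Measurable T) (hTm' : Measurable T.symm)
    (hT : MeasurePreserving T μ μ)
    (π : X → Y) (hπ : Measurable π) (hcomm : π ∘ ⇑T = ⇑S ∘ π)
    (hpush : Measure.map π μ = ν)
    (κ : Y → Measure X)
    (hκmeas : ∀ A : Set X, MeasurableSet A → Measurable fun y => κ y A)
    (hκdis : ∀ B : Set Y, MeasurableSet B → ∀ A : Set X, MeasurableSet A →
      ∫⁻ y in B, κ y A ∂ν = μ (A ∩ π ⁻¹' B))
    (A : Set X) (hA : MeasurableSet A) (hApos : 0 < μ A)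
    (ε : ENNReal) (hε : 0 < ε)
    (B : Set Y) (hB : B = {y : Y | ε < κ y A}) (hBpos : 0 < ν B)
    (l N : ℕ) (hl : 1 ≤ l) (n : ℤ)
    (hrec : 0 < ν (⋂ kk ∈ Fintype.piFinset (fun _ : Fin l => Finset.Icc 1 N),
      ⇑(S ^ qVal kk n) ⁻¹' B)) :
    ∃ E ⊆ Fintype.piFinset (fun _ : Fin l => Finset.Icc 1 N),
      ε * (N : ENNReal) ^ l ≤ (E.card : ENNReal) ∧
      0 < μ (⋂ kk ∈ E, ⇑(T ^ qVal kk n) ⁻¹' A) :=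
  stmt_8_general μ ν S hSm' hS T hTm' hT π hπ hcomm hpush κ hκmeas hκdis A hA ε B hB l N n hrec
end
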